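/- The transformations ρ(φ, v; α, a): (τ, x) ↦ (τ+α, R(φ)x + v·(sin(√λ τ)/√λ) + a·cos(√λ τ)) (with sin(√λ τ)/√λ and cos(√λ τ) defined by their power series in λ, hence real for all real λ) form a group action: composing the transformation with parameters (φ1,v1;α1,a1) after (φ2,v2;α2,a2) again yields a transformation of the same form. -/

import Mathlib

/-- `cos(√λ τ)`, defined via its power series in `λ` (real for all real `λ`). -/
noncomputable def cosl (lam τ : ℝ) : ℝ :=
  if 0 ≤ lam then Real.cos (Real.sqrt lam * τ) else Real.cosh (Real.sqrt (-lam) * τ)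

/-- `sin(√λ τ)/√λ`, defined via its power series in `λ` (real for all real `λ`). -/
noncomputable def sinl (lam τ : ℝ) : ℝ :=
  if lam = 0 then τ
  else if 0 < lam then Real.sin (Real.sqrt lam * τ) / Real.sqrt lam
  else Real.sinh (Real.sqrt (-lam) * τ) / Real.sqrt (-lam)

/-- Rotation of the plane by angle `φ`. -/
noncomputable def rot (φ : ℝ) (w : ℝ × ℝ) : ℝ × ℝ :=
  (Real.cos φ * w.1 + Real.sin φ * w.2, -Real.sin φ * w.1 + Real.cos φ * w.2)

/-- The Newton-Hooke spacetime transformation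
`ρ(φ, v; α, a) : (τ, x) ↦ (τ + α, R(φ)x + sin(√λ τ)/√λ · v + cos(√λ τ) · a)`. -/
noncomputable def nhAct (lam : ℝ) (φ : ℝ) (v : ℝ × ℝ) (α : ℝ) (a : ℝ × ℝ)
    (p : ℝ × (ℝ × ℝ)) : ℝ × (ℝ × ℝ) :=
  (p.1 + α, rot φ p.2 + sinl lam p.1 • v + cosl lam p.1 • a)

/-!
The functions `sinl λ` and `cosl λ` obey the addition laws
`s(τ + α) = s(τ) c(α) + c(τ) s(α)` and `c(τ + α) = c(τ) c(α) - λ s(τ) s(α)` for every real `λ`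
(case by case: circular, linear, hyperbolic). Together with linearity of the rotations and
`R(φ₁) R(φ₂) = R(φ₁ + φ₂)`, this shows that the composite has parameters `φ₁ + φ₂`, `α₂ + α₁`,
`v = R(φ₁) v₂ + c(α₂) v₁ - λ s(α₂) a₁` and `a = R(φ₁) a₂ + s(α₂) v₁ + c(α₂) a₁`.
-/

lemma sinl_add (lam τ α : ℝ) :
    sinl lam (τ + α) = sinl lam τ * cosl lam α + cosl lam τ * sinl lam α := by
  rcases lt_trichotomy lam 0 with h | rfl | h
  · have hs : √(-lam) ≠ 0 := Real.sqrt_ne_zero'.mpr (neg_pos.mpr h)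
    simp only [sinl, cosl, h.ne, h.not_gt, h.not_ge, if_false, mul_add, Real.sinh_add]
    field_simp
  · simp [sinl, cosl]
  · have hs : √lam ≠ 0 := Real.sqrt_ne_zero'.mpr h
    simp only [sinl, cosl, h.ne', h, h.le, if_true, if_false, mul_add, Real.sin_add]
    field_simp

lemma cosl_add (lam τ α : ℝ) :
    cosl lam (τ + α) = cosl lam τ * cosl lam α - lam * (sinl lam τ * sinl lam α) := by
  rcases lt_trichotomy lam 0 with h | rfl | h
  · have hs : √(-lam) ≠ 0 := Real.sqrt_ne_zero'.mpr (neg_pos.mpr h)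
    have hsq : √(-lam) ^ 2 = -lam := Real.sq_sqrt (neg_nonneg.mpr h.le)
    simp only [sinl, cosl, h.ne, h.not_gt, h.not_ge, if_false, mul_add, Real.cosh_add]
    field_simp
    linear_combination (Real.sinh (√(-lam) * τ) * Real.sinh (√(-lam) * α)) * hsq
  · simp [sinl, cosl]
  · have hs : √lam ≠ 0 := Real.sqrt_ne_zero'.mpr h
    have hsq : √lam ^ 2 = lam := Real.sq_sqrt h.le
    simp only [sinl, cosl, h.ne', h, h.le, if_true, if_false, mul_add, Real.cos_add]
    field_simp
    linear_combination (-Real.sin (√lam * τ) * Real.sin (√lam * α)) * hsq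

lemma rot_rot (φ ψ : ℝ) (w : ℝ × ℝ) : rot φ (rot ψ w) = rot (φ + ψ) w := by
  simp only [rot, Real.cos_add, Real.sin_add, Prod.mk.injEq]
  constructor <;> ring

lemma rot_add (φ : ℝ) (u w : ℝ × ℝ) : rot φ (u + w) = rot φ u + rot φ w := by
  simp only [rot, Prod.fst_add, Prod.snd_add, Prod.mk_add_mk, Prod.mk.injEq]
  constructor <;> ring

lemma rot_smul (φ c : ℝ) (w : ℝ × ℝ) : rot φ (c • w) = c • rot φ w := by
  simp only [rot, Prod.smul_fst, Prod.smul_snd, Prod.smul_mk, smul_eq_mul, Prod.mk.injEq]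
  constructor <;> ring

/-- composing two Newton-Hooke transformations again yields a
transformation of the same form, for every real `λ`. -/
theorem newton_hooke_transformations_closed_under_composition
    (lam φ₁ α₁ φ₂ α₂ : ℝ) (v₁ a₁ v₂ a₂ : ℝ × ℝ) :
    ∃ (φ α : ℝ) (v a : ℝ × ℝ), ∀ p : ℝ × (ℝ × ℝ),
      nhAct lam φ₁ v₁ α₁ a₁ (nhAct lam φ₂ v₂ α₂ a₂ p) = nhAct lam φ v α a p := by
  refine ⟨φ₁ + φ₂, α₂ + α₁,
    rot φ₁ v₂ + cosl lam α₂ • v₁ - (lam * sinl lam α₂) • a₁,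
    rot φ₁ a₂ + sinl lam α₂ • v₁ + cosl lam α₂ • a₁, fun ⟨τ, x⟩ => ?_⟩
  simp only [nhAct, add_assoc, rot_add, rot_smul, rot_rot, sinl_add, cosl_add]
  congr 1
  module
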